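/- Let n ≥ 3 and let Δ ⊂ ℝ^n be the root system of the strange Lie superalgebra p(n), namely Δ := {ε_i − ε_j : i ≠ j} ∪ {ε_i + ε_j : i < j} ∪ {−(ε_i + ε_j) : i < j} ∪ {2ε_i : 1 ≤ i ≤ n} (note −2ε_i ∉ Δ, so Δ ≠ −Δ). Define: P(0) := {ε_i − ε_j : i ≠ j} ∪ {ε_i + ε_j : i < j} ∪ {2ε_i : all i}; P⁻(0) := {ε_i − ε_j : i ≠ j} ∪ {−(ε_i + ε_j) : i < j}; for 1 ≤ n₀ ≤ n − 1, P(n₀) := {ε_i − ε_j : i ≠ j and (i, j ≤ n₀ or i, j > n₀)} ∪ {±(ε_i + ε_j) : i ≤ n₀ < j} ∪ {ε_i − ε_j : i ≤ n₀ < j} ∪ {ε_i + ε_j : i ≤ j ≤ n₀} ∪ {−(ε_i + ε_j) : n₀ < i < j}; and P(n) := {ε_i − ε_j : i ≠ j ≤ n − 1} ∪ {±(ε_i + ε_j) : i < j ≤ n − 1} ∪ {2ε_i : i ≤ n − 1} ∪ {−ε_n + ε_j : j ≤ n − 1} ∪ {−ε_n − ε_j : j ≤ n − 1}. Then: (a)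 a subset P ⊆ Δ is a cominuscule parabolic set of roots of Δ if and only if σ(P) ∈ {P(n₀) : 0 ≤ n₀ ≤ n} ∪ {P⁻(0)} for some σ ∈ S_n; each of these n + 2 sets is itself a cominuscule parabolic set of roots and no two of them lie in the same S_n-orbit; (b) every cominuscule parabolic set of roots of Δ has a unique Levi decomposition, i.e. the pair (L, N⁺) is the same for all parabolic sets P̃ of Δ ∪ (−Δ) with P̃ ∩ Δ = P. -/

import Mathlib

open Pointwise

/-- A subset `Pt` of a symmetric set `Φ` (`Φ = -Φ`) is a parabolic set if it is proper,
`Φ = Pt ∪ (-Pt)`, and `Pt` is closed under sums lying in `Φ`. -/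
def IsParabolicIn {V : Type*} [AddCommGroup V] (Φ Pt : Set V) : Prop :=
  Pt ⊂ Φ ∧ Φ = Pt ∪ (-Pt) ∧ ∀ α ∈ Pt, ∀ β ∈ Pt, α + β ∈ Φ → α + β ∈ Pt

/-- A proper subset `P` of `Δ` is a parabolic set of roots if `P = Pt ∩ Δ` for some
parabolic set `Pt` of `Δ ∪ (-Δ)`. -/
def IsParabolicRoots {V : Type*} [AddCommGroup V] (Δ P : Set V) : Prop :=
  P ⊂ Δ ∧ ∃ Pt, IsParabolicIn (Δ ∪ -Δ) Pt ∧ P = Pt ∩ Δ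

/-- `P = L ⊔ N` is a Levi decomposition of the parabolic set of roots `P`, coming from
a parabolic set `Pt` of `Δ ∪ (-Δ)`. -/
def IsLeviDecomp {V : Type*} [AddCommGroup V] (Δ P L N : Set V) : Prop :=
  ∃ Pt, IsParabolicIn (Δ ∪ -Δ) Pt ∧ P = Pt ∩ Δ ∧
    L = Pt ∩ (-Pt) ∩ Δ ∧ N = (Pt \ (-Pt)) ∩ Δ

/-- A parabolic set of roots is cominuscule if it admits a nilradical `N` such that the
sum of any two elements of `N` is not a root. -/
def IsCominusculeRoots {V : Type*} [AddCommGroup V] (Δ P : Set V) : Prop :=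
  IsParabolicRoots Δ P ∧
    ∃ L N, IsLeviDecomp Δ P L N ∧ ∀ α ∈ N, ∀ β ∈ N, α + β ∉ Δ

namespace Pn

variable {n : ℕ}

noncomputable def ε (i : Fin n) : Fin n → ℝ := Pi.single i 1

/-- The root system of the strange Lie superalgebra `p(n)`. -/
noncomputable def Δroot (n : ℕ) : Set (Fin n → ℝ) :=
  {v | ∃ i j : Fin n, i ≠ j ∧ v = ε i - ε j} ∪
  {v | ∃ i j : Fin n, i < j ∧ v = ε i + ε j} ∪
  {v | ∃ i j : Fin n, i < j ∧ v = -(ε i + ε j)} ∪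
  {v | ∃ i : Fin n, v = (2 : ℝ) • ε i}

/-- `P(0)`. -/
noncomputable def P0 (n : ℕ) : Set (Fin n → ℝ) :=
  {v | ∃ i j : Fin n, i ≠ j ∧ v = ε i - ε j} ∪
  {v | ∃ i j : Fin n, i < j ∧ v = ε i + ε j} ∪
  {v | ∃ i : Fin n, v = (2 : ℝ) • ε i}

/-- `P⁻(0)`. -/
noncomputable def Pminus0 (n : ℕ) : Set (Fin n → ℝ) :=
  {v | ∃ i j : Fin n, i ≠ j ∧ v = ε i - ε j} ∪
  {v | ∃ i j : Fin n, i < j ∧ v = -(ε i + ε j)}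

/-- `P(n₀)` for `1 ≤ n₀ ≤ n-1` (1-based `i ≤ n₀` becomes 0-based `(i:ℕ) < n₀`). -/
noncomputable def Pmid (n n₀ : ℕ) : Set (Fin n → ℝ) :=
  {v | ∃ i j : Fin n, i ≠ j ∧
      (((i : ℕ) < n₀ ∧ (j : ℕ) < n₀) ∨ (n₀ ≤ (i : ℕ) ∧ n₀ ≤ (j : ℕ))) ∧ v = ε i - ε j} ∪
  {v | ∃ i j : Fin n, (i : ℕ) < n₀ ∧ n₀ ≤ (j : ℕ) ∧
      (v = ε i + ε j ∨ v = -(ε i + ε j))} ∪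
  {v | ∃ i j : Fin n, (i : ℕ) < n₀ ∧ n₀ ≤ (j : ℕ) ∧ v = ε i - ε j} ∪
  {v | ∃ i j : Fin n, (i : ℕ) ≤ (j : ℕ) ∧ (j : ℕ) < n₀ ∧ v = ε i + ε j} ∪
  {v | ∃ i j : Fin n, n₀ ≤ (i : ℕ) ∧ i < j ∧ v = -(ε i + ε j)}

/-- `P(n)` (here `ε_n` is the basis vector with 0-based index `n-1`). -/
noncomputable def Plast (n : ℕ) : Set (Fin n → ℝ) :=
  {v | ∃ i j : Fin n, i ≠ j ∧ (i : ℕ) < n - 1 ∧ (j : ℕ) < n - 1 ∧ v = ε i - ε j} ∪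
  {v | ∃ i j : Fin n, i < j ∧ (j : ℕ) < n - 1 ∧ (v = ε i + ε j ∨ v = -(ε i + ε j))} ∪
  {v | ∃ i : Fin n, (i : ℕ) < n - 1 ∧ v = (2 : ℝ) • ε i} ∪
  {v | ∃ i j : Fin n, (i : ℕ) = n - 1 ∧ (j : ℕ) < n - 1 ∧ v = -ε i + ε j} ∪
  {v | ∃ i j : Fin n, (i : ℕ) = n - 1 ∧ (j : ℕ) < n - 1 ∧ v = -ε i - ε j}

/-- The representatives `P(n₀)`, `0 ≤ n₀ ≤ n`. -/
noncomputable def P (n n₀ : ℕ) : Set (Fin n → ℝ) :=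
  if n₀ = 0 then P0 n else if n₀ = n then Plast n else Pmid n n₀

/-- The action of `σ ∈ Sₙ` on `ℝⁿ` permuting the `εᵢ`. -/
def act (σ : Equiv.Perm (Fin n)) : (Fin n → ℝ) → (Fin n → ℝ) :=
  fun v => v ∘ σ.symm

end Pn

/-!
A parabolic set `Pt` of `Δ ∪ -Δ` preorders the indices by `i ≽ j :↔ εᵢ - εⱼ ∈ Pt`. When the
nilradical of `Pt` has no two roots summing into `Δ`, this preorder has at most two levels, so
after a permutation the upper level is `{i < p}`. The closure rules of `Pt` then leave two
possibilities: `Pt ∩ Δ = Pmid n p = {⟨λ, ·⟩ ≥ 0}` for `λ = (1,…,1,-1,…,-1)` (this family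
contains `P(0) = Pmid n n` and `P⁻(0) = Pmid n 0`), or `p = n - 1` and
`Pt ∩ Δ = P(n) = {⟨-εₙ, ·⟩ ≥ 0}`. Conversely these weight sets are cominuscule, since every
positive value of the weight on `Δ` exceeds half its maximum. The representatives are told apart
by the number of `i` with `2εᵢ ∈ P` and by whether `P` contains every `-(εᵢ + εⱼ)`. Finally,
two parabolic sets inducing the same `P` can only differ at the roots `-2εᵢ`, and for `n ≥ 3`
each representative forces the answer there.
-/

section Parabolic

variable {V : Type*} [AddCommGroup V]

lemma IsParabolicIn.mem_or_neg_mem {Φ Pt : Set V} (h : IsParabolicIn Φ Pt) {v : V}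
    (hv : v ∈ Φ) : v ∈ Pt ∨ -v ∈ Pt := by
  rw [h.2.1] at hv
  exact hv

lemma IsParabolicIn.add_mem {Φ Pt : Set V} (h : IsParabolicIn Φ Pt) {α β : V} (hα : α ∈ Pt)
    (hβ : β ∈ Pt) (hαβ : α + β ∈ Φ) : α + β ∈ Pt :=
  h.2.2 α hα β hβ hαβ

def IsCominusculeParabolic (Δ Pt : Set V) : Prop :=
  IsParabolicIn (Δ ∪ -Δ) Pt ∧ ∀ α ∈ (Pt \ -Pt) ∩ Δ, ∀ β ∈ (Pt \ -Pt) ∩ Δ, α + β ∉ Δ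

/-- Here `α` lies in the nilradical `(Pt \ -Pt) ∩ Δ`, and `-β ∈ Pt` says that `β` does not. -/
lemma IsCominusculeParabolic.neg_mem {Δ Pt : Set V} (h : IsCominusculeParabolic Δ Pt) {α β : V}
    (hα : α ∈ Pt) (hnα : -α ∉ Pt) (hαΔ : α ∈ Δ) (hβ : β ∈ Pt) (hβΔ : β ∈ Δ)
    (hαβ : α + β ∈ Δ) : -β ∈ Pt :=
  by_contra fun hnβ => h.2 α ⟨⟨hα, hnα⟩, hαΔ⟩ β ⟨⟨hβ, hnβ⟩, hβΔ⟩ hαβ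

lemma isCominusculeRoots_iff {Δ P : Set V} :
    IsCominusculeRoots Δ P ↔ P ⊂ Δ ∧ ∃ Pt, IsCominusculeParabolic Δ Pt ∧ P = Pt ∩ Δ := by
  constructor
  · rintro ⟨⟨hss, -⟩, L, N, ⟨Pt, hPt, hP, -, rfl⟩, hN⟩
    exact ⟨hss, Pt, ⟨hPt, hN⟩, hP⟩
  · rintro ⟨hss, Pt, ⟨hPt, hN⟩, hP⟩
    exact ⟨⟨hss, Pt, hPt, hP⟩, _, _, ⟨Pt, hPt, hP, rfl, rfl⟩, hN⟩

/-- A sum of two roots of the nilradical `{φ > 0}` has weight `> c`, so it is not in `Δ`. -/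
lemma isCominusculeRoots_setOf_nonneg {Δ : Set V} (φ : V →+ ℝ) (c : ℝ) {w : V} (hw : w ∈ Δ)
    (hφw : φ w < 0) (hle : ∀ v ∈ Δ, φ v ≤ c) (hlt : ∀ v ∈ Δ, 0 < φ v → c < 2 * φ v) :
    IsCominusculeRoots Δ {v ∈ Δ | 0 ≤ φ v} := by
  set Pt := {v ∈ Δ ∪ -Δ | 0 ≤ φ v}
  have hneg : ∀ v, -v ∈ Δ ∪ -Δ ↔ v ∈ Δ ∪ -Δ := fun v => by
    simp only [Set.mem_union, Set.mem_neg, neg_neg, or_comm]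
  have hpos : ∀ α ∈ (Pt \ -Pt) ∩ Δ, 0 < φ α := by
    rintro α ⟨⟨⟨hαΦ, hα⟩, hnα⟩, -⟩
    refine lt_of_le_of_ne hα fun h0 => hnα ⟨(hneg α).2 hαΦ, ?_⟩
    rw [map_neg, ← h0, neg_zero]
  refine isCominusculeRoots_iff.2 ⟨⟨Set.sep_subset _ _, fun h => (h hw).2.not_gt hφw⟩, Pt,
    ⟨⟨⟨Set.sep_subset _ _, fun h => (h (Or.inl hw)).2.not_gt hφw⟩, ?_, ?_⟩, ?_⟩, ?_⟩
  · ext v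
    refine ⟨fun hv => ?_, ?_⟩
    · rcases le_or_gt 0 (φ v) with h | h
      · exact Or.inl ⟨hv, h⟩
      · exact Or.inr ⟨(hneg v).2 hv, by rw [map_neg]; linarith⟩
    · rintro (hv | hv)
      · exact hv.1
      · exact (hneg v).1 hv.1
  · rintro α ⟨-, hα⟩ β ⟨-, hβ⟩ hαβ
    exact ⟨hαβ, by rw [map_add]; positivity⟩
  · intro α hα β hβ hαβ
    have := hle _ hαβ
    rw [map_add] at this
    linarith [hlt α hα.2 (hpos α hα), hlt β hβ.2 (hpos β hβ)]
  · ext v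
    simp only [Set.mem_ofPred_eq, Set.mem_inter_iff, Pt]
    exact ⟨fun h => ⟨⟨Or.inl h.1, h.2⟩, h.1⟩, fun h => ⟨h.2, h.1.2⟩⟩

lemma neg_mem_of_neg_mem {Δ P Pt₁ Pt₂ : Set V}
    (hdet : ∀ v ∈ P, -v ∈ Δ ∨ (∃ α ∈ P, ∃ β ∈ P, α + β = -v) ∨ ∃ α ∈ P, α - v ∈ Δ \ P)
    (hPt₁ : IsParabolicIn (Δ ∪ -Δ) Pt₁) (hP₁ : P = Pt₁ ∩ Δ) (hPt₂ : IsParabolicIn (Δ ∪ -Δ) Pt₂)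
    (hP₂ : P = Pt₂ ∩ Δ) {v : V} (hv : v ∈ P) (h : -v ∈ Pt₁) : -v ∈ Pt₂ := by
  rcases hdet v hv with hΔ | ⟨α, hα, β, hβ, hsum⟩ | ⟨α, hα, hαΔ, hαP⟩
  · have : -v ∈ P := hP₁ ▸ ⟨h, hΔ⟩
    exact (hP₂ ▸ this).1
  · have hvΔ : v ∈ Δ := (hP₁ ▸ hv).2
    rw [← hsum]
    exact hPt₂.add_mem (hP₂ ▸ hα).1 (hP₂ ▸ hβ).1
      (by rw [hsum]; exact Or.inr (by rwa [Set.mem_neg, neg_neg]))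
  · rw [sub_eq_add_neg] at hαΔ hαP
    exact absurd (hP₁ ▸ ⟨hPt₁.add_mem (hP₁ ▸ hα).1 h (Or.inl hαΔ), hαΔ⟩) hαP

/-- Parabolic sets inducing `P` can differ only at negatives of roots of `P`, and `hdet` pins
each of these down: it lies in `Δ`, or is a sum of two roots of `P`, or would carry a root of
`P` out of `P`. -/
lemma IsLeviDecomp.unique {Δ P L₁ N₁ L₂ N₂ : Set V}
    (hdet : ∀ v ∈ P, -v ∈ Δ ∨ (∃ α ∈ P, ∃ β ∈ P, α + β = -v) ∨ ∃ α ∈ P, α - v ∈ Δ \ P)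
    (h₁ : IsLeviDecomp Δ P L₁ N₁) (h₂ : IsLeviDecomp Δ P L₂ N₂) : L₁ = L₂ ∧ N₁ = N₂ := by
  obtain ⟨Pt₁, hPt₁, hP₁, rfl, rfl⟩ := h₁
  obtain ⟨Pt₂, hPt₂, hP₂, rfl, rfl⟩ := h₂
  have key : ∀ v, (v ∈ Pt₁ ∧ v ∈ Δ ↔ v ∈ Pt₂ ∧ v ∈ Δ) ∧
      (v ∈ Pt₁ ∧ v ∈ Δ → (-v ∈ Pt₁ ↔ -v ∈ Pt₂)) := fun v => by
    refine ⟨by rw [← Set.mem_inter_iff, ← hP₁, hP₂, Set.mem_inter_iff], fun hv => ?_⟩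
    have hvP : v ∈ P := hP₁ ▸ hv
    exact ⟨neg_mem_of_neg_mem hdet hPt₁ hP₁ hPt₂ hP₂ hvP,
      neg_mem_of_neg_mem hdet hPt₂ hP₂ hPt₁ hP₁ hvP⟩
  constructor <;> ext v <;> simp only [Set.mem_inter_iff, Set.mem_sdiff, Set.mem_neg] <;>
    have := key v <;> tauto

end Parabolic

section Image

variable {V : Type*} [AddCommGroup V] (e : V ≃+ V) {Δ : Set V}

lemma AddEquiv.image_neg_set (S : Set V) : e '' (-S) = -(e '' S) :=
  Set.image_neg_of_apply_neg_eq_neg fun x _ => map_neg e x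

lemma AddEquiv.image_ssubset_image {S T : Set V} (h : S ⊂ T) : e '' S ⊂ e '' T :=
  ⟨Set.image_mono h.1, fun h' => h.2 ((Set.image_subset_image_iff e.injective).1 h')⟩

variable {e}

lemma IsParabolicIn.image {Φ Pt : Set V} (hΦ : e '' Φ = Φ) (h : IsParabolicIn Φ Pt) :
    IsParabolicIn Φ (e '' Pt) := by
  obtain ⟨hss, hcover, hadd⟩ := h
  refine ⟨hΦ ▸ e.image_ssubset_image hss, by rw [← hΦ, hcover, Set.image_union,
    e.image_neg_set], ?_⟩
  rintro _ ⟨α, hα, rfl⟩ _ ⟨β, hβ, rfl⟩ h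
  rw [← map_add, ← hΦ, e.injective.mem_set_image] at h
  rw [← map_add]
  exact Set.mem_image_of_mem e (hadd α hα β hβ h)

lemma IsCominusculeParabolic.image (hΔ : e '' Δ = Δ) {Pt : Set V}
    (h : IsCominusculeParabolic Δ Pt) : IsCominusculeParabolic Δ (e '' Pt) := by
  have hΦ : e '' (Δ ∪ -Δ) = Δ ∪ -Δ := by rw [Set.image_union, e.image_neg_set, hΔ]
  refine ⟨h.1.image hΦ, ?_⟩
  rw [← e.image_neg_set, ← Set.image_sdiff e.injective, ← hΔ, ← Set.image_inter e.injective]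
  rintro _ ⟨α, hα, rfl⟩ _ ⟨β, hβ, rfl⟩ hαβ
  rw [← map_add, e.injective.mem_set_image] at hαβ
  exact h.2 α hα β hβ (hΔ ▸ hαβ)

lemma IsCominusculeRoots.image (hΔ : e '' Δ = Δ) {P : Set V} (h : IsCominusculeRoots Δ P) :
    IsCominusculeRoots Δ (e '' P) := by
  obtain ⟨hss, Pt, hPt, hP⟩ := isCominusculeRoots_iff.1 h
  have hss' := e.image_ssubset_image hss
  rw [hΔ] at hss'
  refine isCominusculeRoots_iff.2 ⟨hss', e '' Pt, hPt.image hΔ, ?_⟩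
  rw [hP, Set.image_inter e.injective, hΔ]

lemma IsLeviDecomp.image (hΔ : e '' Δ = Δ) {P L N : Set V} (h : IsLeviDecomp Δ P L N) :
    IsLeviDecomp Δ (e '' P) (e '' L) (e '' N) := by
  have hΦ : e '' (Δ ∪ -Δ) = Δ ∪ -Δ := by rw [Set.image_union, e.image_neg_set, hΔ]
  obtain ⟨Pt, hPt, rfl, rfl, rfl⟩ := h
  refine ⟨e '' Pt, hPt.image hΦ, ?_, ?_, ?_⟩ <;>
    simp only [Set.image_inter e.injective, Set.image_sdiff e.injective, e.image_neg_set, hΔ]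

end Image

lemma Fin.exists_perm_lt_iff {n : ℕ} (A : Fin n → Prop) :
    ∃ (σ : Equiv.Perm (Fin n)) (p : ℕ), p ≤ n ∧ ∀ i, A i ↔ (σ i : ℕ) < p := by
  classical
  have hcard : Fintype.card {i // A i} + Fintype.card {i // ¬A i} = n := by
    have := Fintype.card_subtype_le A
    rw [Fintype.card_subtype_compl, Fintype.card_fin] at *
    omega
  let σ : Equiv.Perm (Fin n) := (Equiv.sumCompl A).symm.trans
    ((Equiv.sumCongr (Fintype.equivFin _) (Fintype.equivFin _)).trans
      (finSumFinEquiv.trans (finCongr hcard)))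
  refine ⟨σ, _, hcard ▸ Nat.le_add_right _ _, fun i => ?_⟩
  by_cases hi : A i
  · simp [σ, Equiv.sumCompl_symm_apply_of_pos hi, hi]
  · simp [σ, Equiv.sumCompl_symm_apply_of_neg hi, hi]

lemma Fin.exists_val_lt_ne {n m : ℕ} (hm : 2 ≤ m) (hmn : m ≤ n) (i : Fin n) :
    ∃ k : Fin n, (k : ℕ) < m ∧ k ≠ i := by
  by_cases hi : (i : ℕ) = 0
  · exact ⟨⟨1, by omega⟩, by simp; omega, Fin.ne_of_val_ne (by simp; omega)⟩
  · exact ⟨⟨0, by omega⟩, by simp; omega, Fin.ne_of_val_ne (by simp; omega)⟩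

namespace Pn

variable {n : ℕ} {Pt : Set (Fin n → ℝ)}

noncomputable def rootSub (i j : Fin n) : Fin n → ℝ := ε i - ε j
noncomputable def rootAdd (i j : Fin n) : Fin n → ℝ := ε i + ε j
noncomputable def rootNeg (i j : Fin n) : Fin n → ℝ := -(ε i + ε j)

@[simp] lemma ε_sub_ε (i j : Fin n) : ε i - ε j = rootSub i j := rfl
@[simp] lemma ε_add_ε (i j : Fin n) : ε i + ε j = rootAdd i j := rfl
@[simp] lemma neg_rootAdd (i j : Fin n) : -rootAdd i j = rootNeg i j := rfl
@[simp] lemma two_smul_ε (i : Fin n) : (2 : ℝ) • ε i = rootAdd i i := two_smul ℝ _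
@[simp] lemma neg_ε_add_ε (i j : Fin n) : -ε i + ε j = rootSub j i := neg_add_eq_sub _ _
@[simp] lemma neg_ε_sub_ε (i j : Fin n) : -ε i - ε j = rootNeg i j := by
  rw [rootNeg, neg_add']

lemma neg_rootSub (i j : Fin n) : -rootSub i j = rootSub j i := neg_sub _ _
lemma neg_rootNeg (i j : Fin n) : -rootNeg i j = rootAdd i j := neg_neg _
lemma rootAdd_comm (i j : Fin n) : rootAdd i j = rootAdd j i := add_comm _ _
lemma rootNeg_comm (i j : Fin n) : rootNeg i j = rootNeg j i := by
  rw [rootNeg, rootNeg, add_comm]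

lemma rootSub_add_rootSub (i j k : Fin n) : rootSub i j + rootSub j k = rootSub i k :=
  sub_add_sub_cancel _ _ _
lemma rootSub_add_rootAdd (i j k : Fin n) : rootSub i j + rootAdd j k = rootAdd i k := by
  simp only [rootSub, rootAdd]; abel
lemma rootSub_add_rootNeg (i j k : Fin n) : rootSub i j + rootNeg i k = rootNeg j k := by
  simp only [rootSub, rootNeg]; abel
lemma rootAdd_add_rootNeg (i j k : Fin n) : rootAdd i j + rootNeg j k = rootSub i k := by
  simp only [rootAdd, rootNeg, rootSub]; abel

lemma ε_apply (i k : Fin n) : ε i k = if k = i then 1 else 0 := by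
  simp [ε, Pi.single_apply]

lemma ε_injective : Function.Injective (ε : Fin n → Fin n → ℝ) := fun i j h => by
  simpa [ε_apply, eq_comm] using congrFun h i

@[simp] lemma rootSub_eq_rootSub_iff {a b i j : Fin n} (hab : a ≠ b) :
    rootSub a b = rootSub i j ↔ a = i ∧ b = j := by
  refine ⟨fun h => ?_, by rintro ⟨rfl, rfl⟩; rfl⟩
  obtain rfl : a = i := by
    have ha := congrFun h a
    simp only [rootSub, Pi.sub_apply, ε_apply] at ha
    split_ifs at ha <;> first | assumption | norm_num at ha
  exact ⟨rfl, ε_injective (sub_right_injective h)⟩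

@[simp] lemma rootAdd_eq_rootAdd_iff {a b i j : Fin n} :
    rootAdd a b = rootAdd i j ↔ a = i ∧ b = j ∨ a = j ∧ b = i := by
  refine ⟨fun h => ?_, by rintro (⟨rfl, rfl⟩ | ⟨rfl, rfl⟩) <;> simp [rootAdd_comm]⟩
  by_cases hai : a = i
  · subst hai
    exact Or.inl ⟨rfl, ε_injective (add_right_injective _ h)⟩
  by_cases haj : a = j
  · subst haj
    rw [rootAdd_comm i] at h
    exact Or.inr ⟨rfl, ε_injective (add_right_injective _ h)⟩
  have ha := congrFun h a
  simp only [rootAdd, Pi.add_apply, ε_apply, if_neg hai, if_neg haj] at ha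
  split_ifs at ha <;> norm_num at ha

@[simp] lemma rootNeg_eq_rootNeg_iff {a b i j : Fin n} :
    rootNeg a b = rootNeg i j ↔ a = i ∧ b = j ∨ a = j ∧ b = i := by
  rw [← neg_rootAdd, ← neg_rootAdd, neg_inj, rootAdd_eq_rootAdd_iff]

noncomputable def weight (f : Fin n → ℝ) : (Fin n → ℝ) →+ ℝ where
  toFun v := f ⬝ᵥ v
  map_zero' := dotProduct_zero f
  map_add' := dotProduct_add f

lemma weight_rootSub (f : Fin n → ℝ) (i j : Fin n) : weight f (rootSub i j) = f i - f j := by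
  simp [weight, rootSub, ε, dotProduct_sub, dotProduct_single]
lemma weight_rootAdd (f : Fin n → ℝ) (i j : Fin n) : weight f (rootAdd i j) = f i + f j := by
  simp [weight, rootAdd, ε, dotProduct_add, dotProduct_single]
lemma weight_rootNeg (f : Fin n → ℝ) (i j : Fin n) :
    weight f (rootNeg i j) = -(f i + f j) := by
  rw [← neg_rootAdd, map_neg, weight_rootAdd]

@[simp] lemma rootSub_ne_rootAdd (i j k l : Fin n) : rootSub i j ≠ rootAdd k l := fun h => by
  have := congrArg (weight 1) h
  norm_num [weight_rootSub, weight_rootAdd] at this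
@[simp] lemma rootSub_ne_rootNeg (i j k l : Fin n) : rootSub i j ≠ rootNeg k l := fun h => by
  have := congrArg (weight 1) h
  norm_num [weight_rootSub, weight_rootNeg] at this
@[simp] lemma rootAdd_ne_rootNeg (i j k l : Fin n) : rootAdd i j ≠ rootNeg k l := fun h => by
  have := congrArg (weight 1) h
  norm_num [weight_rootAdd, weight_rootNeg] at this
@[simp] lemma rootAdd_ne_rootSub (i j k l : Fin n) : rootAdd i j ≠ rootSub k l :=
  (rootSub_ne_rootAdd k l i j).symm
@[simp] lemma rootNeg_ne_rootSub (i j k l : Fin n) : rootNeg i j ≠ rootSub k l :=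
  (rootSub_ne_rootNeg k l i j).symm
@[simp] lemma rootNeg_ne_rootAdd (i j k l : Fin n) : rootNeg i j ≠ rootAdd k l :=
  (rootAdd_ne_rootNeg k l i j).symm

lemma rootSub_mem_Δroot {a b : Fin n} (hab : a ≠ b) : rootSub a b ∈ Δroot n := by
  simp [Δroot, hab]
lemma rootAdd_mem_Δroot (a b : Fin n) : rootAdd a b ∈ Δroot n := by
  simp [Δroot, and_or_left, exists_or]
  tauto
lemma rootNeg_mem_Δroot {a b : Fin n} : rootNeg a b ∈ Δroot n ↔ a ≠ b := by
  simp [Δroot, and_or_left, exists_or]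

lemma mem_Δroot {v : Fin n → ℝ} : v ∈ Δroot n ↔ (∃ i j, i ≠ j ∧ v = rootSub i j) ∨
    (∃ i j, v = rootAdd i j) ∨ ∃ i j, i ≠ j ∧ v = rootNeg i j := by
  constructor
  · rintro (((⟨i, j, hij, rfl⟩ | ⟨i, j, -, rfl⟩) | ⟨i, j, hij, rfl⟩) | ⟨i, rfl⟩)
    · exact Or.inl ⟨i, j, hij, rfl⟩
    · exact Or.inr (Or.inl ⟨i, j, rfl⟩)
    · exact Or.inr (Or.inr ⟨i, j, hij.ne, rfl⟩)
    · exact Or.inr (Or.inl ⟨i, i, two_smul_ε i⟩)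
  · rintro (⟨i, j, hij, rfl⟩ | ⟨i, j, rfl⟩ | ⟨i, j, hij, rfl⟩)
    · exact rootSub_mem_Δroot hij
    · exact rootAdd_mem_Δroot i j
    · exact rootNeg_mem_Δroot.2 hij

lemma eq_of_subset_Δroot {S T : Set (Fin n → ℝ)} (hS : S ⊆ Δroot n) (hT : T ⊆ Δroot n)
    (hsub : ∀ i j, i ≠ j → (rootSub i j ∈ S ↔ rootSub i j ∈ T))
    (hadd : ∀ i j, rootAdd i j ∈ S ↔ rootAdd i j ∈ T)
    (hneg : ∀ i j, i ≠ j → (rootNeg i j ∈ S ↔ rootNeg i j ∈ T)) : S = T := by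
  have key : ∀ v ∈ Δroot n, v ∈ S ↔ v ∈ T := by
    intro v hv
    rcases mem_Δroot.1 hv with ⟨i, j, hij, rfl⟩ | ⟨i, j, rfl⟩ | ⟨i, j, hij, rfl⟩
    exacts [hsub i j hij, hadd i j, hneg i j hij]
  ext v
  exact ⟨fun h => (key v (hS h)).1 h, fun h => (key v (hT h)).2 h⟩

lemma inter_Δroot_eq {M : Set (Fin n → ℝ)} (hM : M ⊆ Δroot n)
    (hsub : ∀ i j, i ≠ j → (rootSub i j ∈ Pt ↔ rootSub i j ∈ M))
    (hadd : ∀ i j, rootAdd i j ∈ Pt ↔ rootAdd i j ∈ M)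
    (hneg : ∀ i j, i ≠ j → (rootNeg i j ∈ Pt ↔ rootNeg i j ∈ M)) : Pt ∩ Δroot n = M :=
  eq_of_subset_Δroot Set.inter_subset_right hM
    (fun i j hij => by rw [Set.mem_inter_iff, and_iff_left (rootSub_mem_Δroot hij), hsub i j hij])
    (fun i j => by rw [Set.mem_inter_iff, and_iff_left (rootAdd_mem_Δroot i j), hadd i j])
    (fun i j hij => by
      rw [Set.mem_inter_iff, and_iff_left (rootNeg_mem_Δroot.2 hij), hneg i j hij])

abbrev Φ (n : ℕ) : Set (Fin n → ℝ) := Δroot n ∪ -Δroot n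

lemma rootSub_mem_Φ {a b : Fin n} (hab : a ≠ b) : rootSub a b ∈ Φ n :=
  Or.inl (rootSub_mem_Δroot hab)
lemma rootAdd_mem_Φ (a b : Fin n) : rootAdd a b ∈ Φ n := Or.inl (rootAdd_mem_Δroot a b)
lemma rootNeg_mem_Φ (a b : Fin n) : rootNeg a b ∈ Φ n := by
  by_cases hab : a = b
  · right
    rw [Set.mem_neg, neg_rootNeg]
    exact rootAdd_mem_Δroot a b
  · exact Or.inl (rootNeg_mem_Δroot.2 hab)

lemma Φ_subset {S : Set (Fin n → ℝ)} (hsub : ∀ i j, i ≠ j → rootSub i j ∈ S)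
    (hadd : ∀ i j, rootAdd i j ∈ S) (hneg : ∀ i j, rootNeg i j ∈ S) : Φ n ⊆ S := by
  rintro v (hv | hv)
  · rcases mem_Δroot.1 hv with ⟨i, j, hij, rfl⟩ | ⟨i, j, rfl⟩ | ⟨i, j, -, rfl⟩
    exacts [hsub i j hij, hadd i j, hneg i j]
  · rw [Set.mem_neg] at hv
    rw [← neg_neg v]
    rcases mem_Δroot.1 hv with ⟨i, j, hij, h⟩ | ⟨i, j, h⟩ | ⟨i, j, -, h⟩ <;> rw [h]
    · rw [neg_rootSub]; exact hsub j i hij.symm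
    · exact hneg i j
    · rw [neg_rootNeg]; exact hadd i j

section Representatives

variable {a b : Fin n} {p : ℕ}

lemma rootSub_mem_P0 (hab : a ≠ b) : rootSub a b ∈ P0 n := by simp [P0, hab]
lemma rootAdd_mem_P0 : rootAdd a b ∈ P0 n := by
  simp [P0, and_or_left, exists_or]; tauto
lemma rootNeg_not_mem_P0 : rootNeg a b ∉ P0 n := by simp [P0]

lemma rootSub_mem_Pminus0 (hab : a ≠ b) : rootSub a b ∈ Pminus0 n := by simp [Pminus0, hab]
lemma rootAdd_not_mem_Pminus0 : rootAdd a b ∉ Pminus0 n := by simp [Pminus0]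
lemma rootNeg_mem_Pminus0 : rootNeg a b ∈ Pminus0 n ↔ a ≠ b := by
  simp [Pminus0, and_or_left, exists_or]

lemma rootSub_mem_Pmid (hab : a ≠ b) : rootSub a b ∈ Pmid n p ↔ (a : ℕ) < p ∨ p ≤ b := by
  simp [Pmid, hab]
  omega
lemma rootAdd_mem_Pmid : rootAdd a b ∈ Pmid n p ↔ (a : ℕ) < p ∨ b < p := by
  simp [Pmid, and_or_left, exists_or]
  grind
lemma rootNeg_mem_Pmid : rootNeg a b ∈ Pmid n p ↔ a ≠ b ∧ (p ≤ (a : ℕ) ∨ p ≤ b) := by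
  simp [Pmid, and_or_left, exists_or]
  grind

lemma rootSub_mem_Plast (hab : a ≠ b) : rootSub a b ∈ Plast n ↔ (a : ℕ) < n - 1 := by
  simp [Plast, hab, and_or_left, exists_or]
  omega
lemma rootAdd_mem_Plast : rootAdd a b ∈ Plast n ↔ (a : ℕ) < n - 1 ∧ (b : ℕ) < n - 1 := by
  simp [Plast, and_or_left, exists_or]
  grind
lemma rootNeg_mem_Plast : rootNeg a b ∈ Plast n ↔ a ≠ b := by
  simp [Plast, and_or_left, exists_or]
  grind

lemma P0_subset_Δroot : P0 n ⊆ Δroot n := by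
  rintro v ((⟨i, j, hij, rfl⟩ | ⟨i, j, -, rfl⟩) | ⟨i, rfl⟩)
  exacts [rootSub_mem_Δroot hij, rootAdd_mem_Δroot i j, by simpa using rootAdd_mem_Δroot i i]

lemma Pminus0_subset_Δroot : Pminus0 n ⊆ Δroot n := by
  rintro v (⟨i, j, hij, rfl⟩ | ⟨i, j, hij, rfl⟩)
  exacts [rootSub_mem_Δroot hij, rootNeg_mem_Δroot.2 hij.ne]

lemma Pmid_subset_Δroot : Pmid n p ⊆ Δroot n := by
  rintro v ((((⟨i, j, hij, -, rfl⟩ | ⟨i, j, hi, hj, rfl | rfl⟩) | ⟨i, j, hi, hj, rfl⟩) |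
    ⟨i, j, -, -, rfl⟩) | ⟨i, j, -, hij, rfl⟩)
  · exact rootSub_mem_Δroot hij
  · exact rootAdd_mem_Δroot i j
  · exact rootNeg_mem_Δroot.2 (Fin.ne_of_val_ne (by omega))
  · exact rootSub_mem_Δroot (Fin.ne_of_val_ne (by omega))
  · exact rootAdd_mem_Δroot i j
  · exact rootNeg_mem_Δroot.2 hij.ne

lemma Plast_subset_Δroot : Plast n ⊆ Δroot n := by
  rintro v ((((⟨i, j, hij, -, -, rfl⟩ | ⟨i, j, hij, -, rfl | rfl⟩) | ⟨i, -, rfl⟩) |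
    ⟨i, j, hi, hj, rfl⟩) | ⟨i, j, hi, hj, rfl⟩)
  · exact rootSub_mem_Δroot hij
  · exact rootAdd_mem_Δroot i j
  · exact rootNeg_mem_Δroot.2 hij.ne
  · simpa using rootAdd_mem_Δroot i i
  · simpa using rootSub_mem_Δroot (Fin.ne_of_val_ne (by omega) : j ≠ i)
  · simpa using rootNeg_mem_Δroot.2 (Fin.ne_of_val_ne (by omega) : i ≠ j)

lemma P0_eq_Pmid : P0 n = Pmid n n := by
  refine eq_of_subset_Δroot P0_subset_Δroot Pmid_subset_Δroot (fun i j hij => ?_) (fun i j => ?_)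
    (fun i j hij => ?_)
  · simp [rootSub_mem_P0 hij, rootSub_mem_Pmid hij]
  · simp [rootAdd_mem_P0, rootAdd_mem_Pmid]
  · simp [rootNeg_not_mem_P0, rootNeg_mem_Pmid]

lemma Pminus0_eq_Pmid : Pminus0 n = Pmid n 0 := by
  refine eq_of_subset_Δroot Pminus0_subset_Δroot Pmid_subset_Δroot (fun i j hij => ?_)
    (fun i j => ?_) (fun i j hij => ?_)
  · simp [rootSub_mem_Pminus0 hij, rootSub_mem_Pmid hij]
  · simp [rootAdd_not_mem_Pminus0, rootAdd_mem_Pmid]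
  · simp [rootNeg_mem_Pminus0, rootNeg_mem_Pmid, hij]

end Representatives

section Cominuscule

noncomputable def levelWeight (q : ℕ) : Fin n → ℝ := fun k => if (k : ℕ) < q then 1 else -1

noncomputable def lastWeight : Fin n → ℝ := fun k => if (k : ℕ) < n - 1 then 0 else -1

lemma Pmid_eq_setOf_weight (q : ℕ) :
    Pmid n q = {v ∈ Δroot n | 0 ≤ weight (levelWeight q) v} := by
  refine eq_of_subset_Δroot Pmid_subset_Δroot (Set.sep_subset _ _) (fun i j hij => ?_)
    (fun i j => ?_) (fun i j hij => ?_)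
  · simp only [rootSub_mem_Pmid hij, Set.mem_sep_iff, rootSub_mem_Δroot hij, weight_rootSub,
      levelWeight, true_and]
    split_ifs <;> norm_num <;> omega
  · simp only [rootAdd_mem_Pmid, Set.mem_sep_iff, rootAdd_mem_Δroot, weight_rootAdd,
      levelWeight, true_and]
    split_ifs <;> norm_num <;> omega
  · simp only [rootNeg_mem_Pmid, Set.mem_sep_iff, rootNeg_mem_Δroot, weight_rootNeg,
      levelWeight, hij, true_and, ne_eq, not_false_eq_true]
    split_ifs <;> norm_num <;> omega

lemma Plast_eq_setOf_weight : Plast n = {v ∈ Δroot n | 0 ≤ weight lastWeight v} := by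
  refine eq_of_subset_Δroot Plast_subset_Δroot (Set.sep_subset _ _) (fun i j hij => ?_)
    (fun i j => ?_) (fun i j hij => ?_)
  · simp only [rootSub_mem_Plast hij, Set.mem_sep_iff, rootSub_mem_Δroot hij, weight_rootSub,
      lastWeight, true_and]
    split_ifs <;> norm_num <;> omega
  · simp only [rootAdd_mem_Plast, Set.mem_sep_iff, rootAdd_mem_Δroot, weight_rootAdd,
      lastWeight, true_and]
    split_ifs <;> norm_num <;> omega
  · simp only [rootNeg_mem_Plast, Set.mem_sep_iff, rootNeg_mem_Δroot, weight_rootNeg,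
      lastWeight, hij, true_and, ne_eq, not_false_eq_true]
    split_ifs <;> norm_num

lemma isCominusculeRoots_Pmid (hn : 2 ≤ n) {q : ℕ} (hq : q ≤ n) :
    IsCominusculeRoots (Δroot n) (Pmid n q) := by
  have hvalues : ∀ v ∈ Δroot n, weight (levelWeight q) v = -2 ∨ weight (levelWeight q) v = 0 ∨
      weight (levelWeight q) v = 2 := by
    intro v hv
    rcases mem_Δroot.1 hv with ⟨i, j, -, rfl⟩ | ⟨i, j, rfl⟩ | ⟨i, j, -, rfl⟩ <;>
      simp only [weight_rootSub, weight_rootAdd, weight_rootNeg, levelWeight] <;>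
      split_ifs <;> norm_num
  obtain ⟨w, hw, hφw⟩ : ∃ w ∈ Δroot n, weight (levelWeight q) w < 0 := by
    rcases hq.lt_or_eq with hq | rfl
    · refine ⟨rootAdd ⟨q, hq⟩ ⟨q, hq⟩, rootAdd_mem_Δroot _ _, ?_⟩
      simp [weight_rootAdd, levelWeight]
    · refine ⟨rootNeg ⟨0, by omega⟩ ⟨1, by omega⟩, rootNeg_mem_Δroot.2 (by simp), ?_⟩
      simp only [weight_rootNeg, levelWeight]
      split_ifs <;> norm_num <;> omega
  rw [Pmid_eq_setOf_weight]
  refine isCominusculeRoots_setOf_nonneg _ 2 hw hφw (fun v hv => ?_) (fun v hv hpos => ?_) <;>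
    rcases hvalues v hv with h | h | h <;> linarith

lemma isCominusculeRoots_Plast (hn : 1 ≤ n) : IsCominusculeRoots (Δroot n) (Plast n) := by
  have hvalues : ∀ v ∈ Δroot n, weight lastWeight v ≤ 0 ∨ weight lastWeight v = 1 := by
    intro v hv
    rcases mem_Δroot.1 hv with ⟨i, j, -, rfl⟩ | ⟨i, j, rfl⟩ | ⟨i, j, hij, rfl⟩ <;>
      simp only [weight_rootSub, weight_rootAdd, weight_rootNeg, lastWeight] <;>
      split_ifs <;> norm_num
    exact hij (Fin.ext (by omega))
  have hlast : n - 1 < n := by omega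
  rw [Plast_eq_setOf_weight]
  refine isCominusculeRoots_setOf_nonneg _ 1 (rootAdd_mem_Δroot ⟨n - 1, hlast⟩ ⟨n - 1, hlast⟩)
    (by simp [weight_rootAdd, lastWeight]) (fun v hv => ?_) (fun v hv hpos => ?_) <;>
    rcases hvalues v hv with h | h <;> linarith

end Cominuscule

section Standard

variable {M : Set (Fin n → ℝ)}

/-- The `n + 2` representatives: `Pmid n q` for `q ≤ n`, among them `P0 n = Pmid n n` and
`Pminus0 n = Pmid n 0`, and `Plast n`. -/
def IsStandard (M : Set (Fin n → ℝ)) : Prop := (∃ q ≤ n, M = Pmid n q) ∨ M = Plast n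

lemma isStandard_iff (hn : n ≠ 0) :
    IsStandard M ↔ (∃ n₀ ≤ n, M = P n n₀) ∨ M = Pminus0 n := by
  constructor
  · rintro (⟨q, hq, rfl⟩ | rfl)
    · by_cases hq0 : q = 0
      · exact Or.inr (hq0 ▸ Pminus0_eq_Pmid.symm)
      by_cases hqn : q = n
      · exact Or.inl ⟨0, Nat.zero_le n, by simp [P, P0_eq_Pmid, hqn]⟩
      · exact Or.inl ⟨q, hq, by simp [P, hq0, hqn]⟩
    · exact Or.inl ⟨n, le_rfl, by simp [P, hn]⟩
  · rintro (⟨n₀, h₀, rfl⟩ | rfl)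
    · unfold P
      split_ifs
      exacts [Or.inl ⟨n, le_rfl, P0_eq_Pmid⟩, Or.inr rfl, Or.inl ⟨n₀, h₀, rfl⟩]
    · exact Or.inl ⟨0, Nat.zero_le n, Pminus0_eq_Pmid⟩

lemma IsStandard.isCominusculeRoots (hn : 2 ≤ n) (hM : IsStandard M) :
    IsCominusculeRoots (Δroot n) M := by
  rcases hM with ⟨q, hq, rfl⟩ | rfl
  exacts [isCominusculeRoots_Pmid hn hq, isCominusculeRoots_Plast (by omega)]

lemma IsStandard.subset_Δroot (hM : IsStandard M) : M ⊆ Δroot n := by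
  rcases hM with ⟨q, -, rfl⟩ | rfl
  exacts [Pmid_subset_Δroot, Plast_subset_Δroot]

end Standard

section Action

variable (σ : Equiv.Perm (Fin n))

lemma act_ε (i : Fin n) : act σ (ε i) = ε (σ i) := by
  funext k
  simp only [act, Function.comp_apply, ε_apply, Equiv.symm_apply_eq]

lemma act_rootSub (i j : Fin n) : act σ (rootSub i j) = rootSub (σ i) (σ j) := by
  change act σ (ε i) - act σ (ε j) = _
  rw [act_ε, act_ε]; rfl
lemma act_rootAdd (i j : Fin n) : act σ (rootAdd i j) = rootAdd (σ i) (σ j) := by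
  change act σ (ε i) + act σ (ε j) = _
  rw [act_ε, act_ε]; rfl
lemma act_rootNeg (i j : Fin n) : act σ (rootNeg i j) = rootNeg (σ i) (σ j) := by
  rw [← neg_rootAdd, ← neg_rootAdd, ← act_rootAdd]; rfl

def actEquiv : (Fin n → ℝ) ≃+ (Fin n → ℝ) where
  toFun := act σ
  invFun := act σ⁻¹
  left_inv v := by funext k; simp [act, Equiv.Perm.inv_def]
  right_inv v := by funext k; simp [act, Equiv.Perm.inv_def]
  map_add' _ _ := rfl

lemma act_injective : Function.Injective (act σ) := (actEquiv σ).injective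

lemma mem_act_image {S : Set (Fin n → ℝ)} {v : Fin n → ℝ} : v ∈ act σ '' S ↔ act σ⁻¹ v ∈ S :=
  (actEquiv σ).toEquiv.image_eq_preimage_symm S ▸ Iff.rfl

lemma act_mem_Δroot {v : Fin n → ℝ} (hv : v ∈ Δroot n) : act σ v ∈ Δroot n := by
  rcases mem_Δroot.1 hv with ⟨i, j, hij, rfl⟩ | ⟨i, j, rfl⟩ | ⟨i, j, hij, rfl⟩
  · exact act_rootSub σ i j ▸ rootSub_mem_Δroot (σ.injective.ne hij)
  · exact act_rootAdd σ i j ▸ rootAdd_mem_Δroot _ _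
  · exact act_rootNeg σ i j ▸ rootNeg_mem_Δroot.2 (σ.injective.ne hij)

lemma act_image_Δroot : act σ '' Δroot n = Δroot n :=
  Set.Subset.antisymm (Set.image_subset_iff.2 fun _ => act_mem_Δroot σ)
    fun _ hv => (mem_act_image σ).2 (act_mem_Δroot σ⁻¹ hv)

lemma isCominusculeRoots_act_image_iff {P : Set (Fin n → ℝ)} :
    IsCominusculeRoots (Δroot n) (act σ '' P) ↔ IsCominusculeRoots (Δroot n) P := by
  refine ⟨fun h => ?_, IsCominusculeRoots.image (e := actEquiv σ) (act_image_Δroot σ)⟩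
  have := h.image (e := actEquiv σ⁻¹) (act_image_Δroot σ⁻¹)
  rwa [← Set.image_comp, show ⇑(actEquiv σ⁻¹) ∘ act σ = id from funext (actEquiv σ).left_inv,
    Set.image_id] at this

end Action

section Closure

variable {i j k : Fin n}

lemma rootSub_mem_or (hPt : IsParabolicIn (Φ n) Pt) (hij : i ≠ j) :
    rootSub i j ∈ Pt ∨ rootSub j i ∈ Pt := by
  simpa only [neg_rootSub] using hPt.mem_or_neg_mem (rootSub_mem_Φ hij)

lemma rootAdd_mem_or (hPt : IsParabolicIn (Φ n) Pt) (i j : Fin n) :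
    rootAdd i j ∈ Pt ∨ rootNeg i j ∈ Pt :=
  hPt.mem_or_neg_mem (rootAdd_mem_Φ i j)

lemma rootSub_mem_trans (hPt : IsParabolicIn (Φ n) Pt) (hik : i ≠ k) (h₁ : rootSub i j ∈ Pt)
    (h₂ : rootSub j k ∈ Pt) : rootSub i k ∈ Pt :=
  rootSub_add_rootSub i j k ▸ hPt.add_mem h₁ h₂ (rootSub_add_rootSub i j k ▸ rootSub_mem_Φ hik)

lemma rootAdd_mem_of_rootSub_mem (hPt : IsParabolicIn (Φ n) Pt) (h₁ : rootSub i j ∈ Pt)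
    (h₂ : rootAdd j k ∈ Pt) : rootAdd i k ∈ Pt :=
  rootSub_add_rootAdd i j k ▸ hPt.add_mem h₁ h₂ (rootSub_add_rootAdd i j k ▸ rootAdd_mem_Φ i k)

lemma rootNeg_mem_of_rootSub_mem (hPt : IsParabolicIn (Φ n) Pt) (h₁ : rootSub i j ∈ Pt)
    (h₂ : rootNeg i k ∈ Pt) : rootNeg j k ∈ Pt :=
  rootSub_add_rootNeg i j k ▸ hPt.add_mem h₁ h₂ (rootSub_add_rootNeg i j k ▸ rootNeg_mem_Φ j k)

lemma rootSub_mem_of_rootAdd_mem (hPt : IsParabolicIn (Φ n) Pt) (hik : i ≠ k)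
    (h₁ : rootAdd i j ∈ Pt) (h₂ : rootNeg j k ∈ Pt) : rootSub i k ∈ Pt :=
  rootAdd_add_rootNeg i j k ▸ hPt.add_mem h₁ h₂ (rootAdd_add_rootNeg i j k ▸ rootSub_mem_Φ hik)

end Closure

/-- With `i ≽ j :↔ εᵢ - εⱼ ∈ Pt`, a cominuscule `Pt` has at most two levels: `i ≽ j` iff `i` is
maximal or `j` is not. -/
lemma rootSub_mem_iff_of_isCominusculeParabolic (h : IsCominusculeParabolic (Δroot n) Pt)
    {i j : Fin n} (hij : i ≠ j) : rootSub i j ∈ Pt ↔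
      (∀ k, k ≠ i → rootSub i k ∈ Pt) ∨ ¬∀ k, k ≠ j → rootSub j k ∈ Pt := by
  constructor
  · intro hsub
    refine or_not_of_imp fun htop k hki => ?_
    by_cases hkj : k = j
    · exact hkj ▸ hsub
    · exact rootSub_mem_trans h.1 (Ne.symm hki) hsub (htop k hkj)
  · rintro (htop | hntop)
    · exact htop j (Ne.symm hij)
    push Not at hntop
    obtain ⟨k, hkj, hjk⟩ := hntop
    have hkj' : rootSub k j ∈ Pt := (rootSub_mem_or h.1 hkj).resolve_right hjk
    refine (rootSub_mem_or h.1 hij).elim id fun hji => ?_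
    by_cases hki : k = i
    · exact hki ▸ hkj'
    rw [← neg_rootSub]
    exact h.neg_mem hkj' (by rwa [neg_rootSub]) (rootSub_mem_Δroot hkj) hji
      (rootSub_mem_Δroot (Ne.symm hij)) (rootSub_add_rootSub k j i ▸ rootSub_mem_Δroot hki)

/-- `Pt` ranks the indices `< p` strictly above the indices `≥ p`, where `i` ranks at least as
high as `j` when `εᵢ - εⱼ ∈ Pt`. -/
def IsSplitAt (Pt : Set (Fin n → ℝ)) (p : ℕ) : Prop :=
  ∀ i j : Fin n, i ≠ j → (rootSub i j ∈ Pt ↔ (i : ℕ) < p ∨ p ≤ j)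

lemma exists_perm_isSplitAt_image (h : IsCominusculeParabolic (Δroot n) Pt) :
    ∃ (σ : Equiv.Perm (Fin n)) (p : ℕ), p ≤ n ∧ IsSplitAt (act σ '' Pt) p := by
  obtain ⟨σ, p, hp, hσ⟩ := Fin.exists_perm_lt_iff fun i => ∀ k, k ≠ i → rootSub i k ∈ Pt
  refine ⟨σ, p, hp, fun i j hij => ?_⟩
  rw [mem_act_image, act_rootSub,
    rootSub_mem_iff_of_isCominusculeParabolic h (σ⁻¹.injective.ne hij), hσ, hσ]
  simp [not_lt]

section IsSplitAt

variable {p : ℕ} {i j k : Fin n}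

lemma IsSplitAt.rootSub_mem (hs : IsSplitAt Pt p) (hij : i ≠ j) (h : (i : ℕ) < p ∨ p ≤ j) :
    rootSub i j ∈ Pt :=
  (hs i j hij).2 h

lemma IsSplitAt.neg_rootSub_not_mem (hs : IsSplitAt Pt p) (hi : (i : ℕ) < p) (hj : p ≤ (j : ℕ)) :
    -rootSub i j ∉ Pt := by
  rw [neg_rootSub, hs j i (Fin.ne_of_val_ne (by omega))]
  omega

lemma IsSplitAt.rootAdd_mem (hPt : IsParabolicIn (Φ n) Pt) (hs : IsSplitAt Pt p)
    (hij : (i : ℕ) < p ∨ p ≤ j) (h : rootAdd j k ∈ Pt) : rootAdd i k ∈ Pt := by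
  by_cases hij' : i = j
  · exact hij' ▸ h
  · exact rootAdd_mem_of_rootSub_mem hPt (hs.rootSub_mem hij' hij) h

lemma IsSplitAt.rootNeg_mem (hPt : IsParabolicIn (Φ n) Pt) (hs : IsSplitAt Pt p)
    (hij : (i : ℕ) < p ∨ p ≤ j) (h : rootNeg i k ∈ Pt) : rootNeg j k ∈ Pt := by
  by_cases hij' : i = j
  · exact hij' ▸ h
  · exact rootNeg_mem_of_rootSub_mem hPt (hs.rootSub_mem hij' hij) h

end IsSplitAt

lemma inter_Δroot_eq_of_isSplitAt_self (hPt : IsParabolicIn (Φ n) Pt) (hs : IsSplitAt Pt n)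
    (hn : 0 < n) : Pt ∩ Δroot n = Pmid n n ∨ Pt ∩ Δroot n = Pmid n 0 := by
  have hadd : ∀ i j, rootAdd i j ∈ Pt → ∀ k l, rootAdd k l ∈ Pt := by
    intro i j hij k l
    have hkj := hs.rootAdd_mem hPt (Or.inl k.isLt) hij
    rw [rootAdd_comm] at hkj ⊢
    exact hs.rootAdd_mem hPt (Or.inl l.isLt) hkj
  have hneg : ∀ i j, rootNeg i j ∈ Pt → ∀ k l, rootNeg k l ∈ Pt := by
    intro i j hij k l
    have hkj := hs.rootNeg_mem hPt (Or.inl i.isLt) hij (j := k)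
    rw [rootNeg_comm] at hkj ⊢
    exact hs.rootNeg_mem hPt (Or.inl j.isLt) hkj
  have hsub : ∀ i j, i ≠ j → rootSub i j ∈ Pt := fun i j hij => hs.rootSub_mem hij (Or.inl i.isLt)
  set o : Fin n := ⟨0, hn⟩
  have hnot : ¬(rootAdd o o ∈ Pt ∧ rootNeg o o ∈ Pt) := fun h =>
    hPt.1.2 (Φ_subset hsub (hadd o o h.1) (hneg o o h.2))
  by_cases ho : rootAdd o o ∈ Pt
  · refine Or.inl (inter_Δroot_eq Pmid_subset_Δroot (fun i j hij => ?_) (fun i j => ?_)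
      (fun i j hij => ?_))
    · simp [hsub i j hij, rootSub_mem_Pmid hij]
    · simp [hadd o o ho i j, rootAdd_mem_Pmid]
    · simp only [rootNeg_mem_Pmid, not_le.2 i.isLt, not_le.2 j.isLt, or_self, and_false,
        iff_false]
      exact fun h => hnot ⟨ho, hneg i j h o o⟩
  · have ho' := (rootAdd_mem_or hPt o o).resolve_left ho
    refine Or.inr (inter_Δroot_eq Pmid_subset_Δroot (fun i j hij => ?_) (fun i j => ?_)
      (fun i j hij => ?_))
    · simp [hsub i j hij, rootSub_mem_Pmid hij]
    · simp only [rootAdd_mem_Pmid, not_lt_zero, or_self, iff_false]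
      exact fun h => ho (hadd i j h o o)
    · simp [hneg o o ho' i j, rootNeg_mem_Pmid, hij]

section TwoLevels

variable {p : ℕ} {i j k : Fin n}

lemma IsSplitAt.rootNeg_mem_of_rootAdd_mem (h : IsCominusculeParabolic (Δroot n) Pt)
    (hs : IsSplitAt Pt p) (hp : 0 < p) (hj : p ≤ (j : ℕ)) (hjk : rootAdd j k ∈ Pt) :
    rootNeg j k ∈ Pt := by
  set o : Fin n := ⟨0, by omega⟩
  have hoj : o ≠ j := Fin.ne_of_val_ne (by simp [o]; omega)
  rw [← neg_rootAdd]
  exact h.neg_mem (hs.rootSub_mem hoj (Or.inl hp)) (hs.neg_rootSub_not_mem hp hj)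
    (rootSub_mem_Δroot hoj) hjk (rootAdd_mem_Δroot j k)
    (rootSub_add_rootAdd o j k ▸ rootAdd_mem_Δroot o k)

lemma IsSplitAt.rootAdd_mem_of_rootNeg_mem (h : IsCominusculeParabolic (Δroot n) Pt)
    (hs : IsSplitAt Pt p) (hi : (i : ℕ) < p) (hj : p ≤ (j : ℕ)) (hik : i ≠ k) (hjk : j ≠ k)
    (hneg : rootNeg i k ∈ Pt) : rootAdd i k ∈ Pt := by
  have hij : i ≠ j := Fin.ne_of_val_ne (by omega)
  rw [← neg_rootNeg]
  exact h.neg_mem (hs.rootSub_mem hij (Or.inl hi)) (hs.neg_rootSub_not_mem hi hj)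
    (rootSub_mem_Δroot hij) hneg (rootNeg_mem_Δroot.2 hik)
    (rootSub_add_rootNeg i j k ▸ rootNeg_mem_Δroot.2 hjk)

lemma inter_Δroot_eq_Pmid (h : IsCominusculeParabolic (Δroot n) Pt) (hs : IsSplitAt Pt p)
    (hp : 0 < p) (hpn : p < n)
    (hcross : ∀ i j : Fin n, (i : ℕ) < p → p ≤ (j : ℕ) → rootAdd i j ∈ Pt) :
    Pt ∩ Δroot n = Pmid n p := by
  set o : Fin n := ⟨0, by omega⟩
  set b : Fin n := ⟨p, hpn⟩
  have hcrossNeg : ∀ i j : Fin n, (i : ℕ) < p → p ≤ (j : ℕ) → rootNeg j i ∈ Pt :=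
    fun i j hi hj => hs.rootNeg_mem_of_rootAdd_mem h hp hj (rootAdd_comm i j ▸ hcross i j hi hj)
  have hadd : ∀ i j : Fin n, (i : ℕ) < p → rootAdd i j ∈ Pt := by
    intro i j hi
    rcases lt_or_ge (j : ℕ) p with hj | hj
    · exact hs.rootAdd_mem h.1 (Or.inl hi) (rootAdd_comm j b ▸ hcross j b hj le_rfl)
    · exact hcross i j hi hj
  have hneg : ∀ i j : Fin n, p ≤ (i : ℕ) → rootNeg i j ∈ Pt := by
    intro i j hi
    rcases lt_or_ge (j : ℕ) p with hj | hj
    · exact hcrossNeg j i hj hi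
    · exact hs.rootNeg_mem h.1 (Or.inr hi) (rootNeg_comm j o ▸ hcrossNeg o j hp hj)
  refine inter_Δroot_eq Pmid_subset_Δroot (fun i j hij => ?_) (fun i j => ?_) (fun i j hij => ?_)
  · rw [hs i j hij, rootSub_mem_Pmid hij]
  · rw [rootAdd_mem_Pmid]
    refine ⟨fun hij => by_contra fun hc => ?_, ?_⟩
    · push Not at hc
      have hio : i ≠ o := Fin.ne_of_val_ne (by simp [o]; omega)
      have := (hs i o hio).1 (rootSub_mem_of_rootAdd_mem h.1 hio hij (hneg j o hc.2))
      simp [o] at this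
      omega
    · rintro (hi | hj)
      · exact hadd i j hi
      · exact rootAdd_comm j i ▸ hadd j i hj
  · rw [rootNeg_mem_Pmid, and_iff_right hij]
    refine ⟨fun hij' => by_contra fun hc => ?_, ?_⟩
    · push Not at hc
      have hbj : b ≠ j := Fin.ne_of_val_ne (by simp [b]; omega)
      have := (hs b j hbj).1
        (rootSub_mem_of_rootAdd_mem h.1 hbj (rootAdd_comm i b ▸ hcross i b hc.1 le_rfl) hij')
      simp [b] at this
      omega
    · rintro (hi | hj)
      · exact hneg i j hi
      · exact rootNeg_comm j i ▸ hneg j i hj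

lemma eq_sub_one_of_rootAdd_not_mem (h : IsCominusculeParabolic (Δroot n) Pt)
    (hs : IsSplitAt Pt p) (hp : 0 < p) (hpn : p < n)
    (hcross : ∀ i j : Fin n, (i : ℕ) < p → p ≤ (j : ℕ) → rootAdd i j ∉ Pt) : p = n - 1 := by
  by_contra hne
  set o : Fin n := ⟨0, by omega⟩
  set b : Fin n := ⟨p, hpn⟩
  set b' : Fin n := ⟨p + 1, by omega⟩
  have hb' : p ≤ (b' : ℕ) := by simp [b']
  have hneg : rootNeg o b' ∈ Pt := (rootAdd_mem_or h.1 o b').resolve_left (hcross o b' hp hb')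
  exact hcross o b' hp hb' (hs.rootAdd_mem_of_rootNeg_mem h hp (j := b) le_rfl
    (Fin.ne_of_val_ne (by simp [o, b'])) (Fin.ne_of_val_ne (by simp [b, b'])) hneg)

lemma rootAdd_mem_of_lt_sub_one (h : IsCominusculeParabolic (Δroot n) Pt) (hn : 3 ≤ n)
    (hs : IsSplitAt Pt (n - 1)) (hi : (i : ℕ) < n - 1) (hj : (j : ℕ) < n - 1) :
    rootAdd i j ∈ Pt := by
  set l : Fin n := ⟨n - 1, by omega⟩
  have hne : ∀ i j : Fin n, (i : ℕ) < n - 1 → (j : ℕ) < n - 1 → i ≠ j → rootAdd i j ∈ Pt :=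
    fun i j hi hj hij => (rootAdd_mem_or h.1 i j).elim id
      (hs.rootAdd_mem_of_rootNeg_mem h hi (j := l) le_rfl hij
        (Fin.ne_of_val_ne (by simp [l]; omega)))
  by_cases hij : i = j
  · subst hij
    obtain ⟨k, hk, hki⟩ := Fin.exists_val_lt_ne (by omega : 2 ≤ n - 1) (Nat.sub_le n 1) i
    exact hs.rootAdd_mem h.1 (Or.inl hi) (hne k i hk hi hki)
  · exact hne i j hi hj hij

lemma rootNeg_mem_of_ne (h : IsCominusculeParabolic (Δroot n) Pt)
    (hcross : ∀ i j : Fin n, (i : ℕ) < n - 1 → n - 1 ≤ (j : ℕ) → rootAdd i j ∉ Pt)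
    (hij : i ≠ j) : rootNeg i j ∈ Pt := by
  have hcrossNeg : ∀ i j : Fin n, (i : ℕ) < n - 1 → n - 1 ≤ (j : ℕ) → rootNeg i j ∈ Pt :=
    fun i j hi hj => (rootAdd_mem_or h.1 i j).resolve_left (hcross i j hi hj)
  rcases lt_or_ge (i : ℕ) (n - 1) with hi | hi <;> rcases lt_or_ge (j : ℕ) (n - 1) with hj | hj
  · set l : Fin n := ⟨n - 1, by omega⟩
    have hl : ∀ k : Fin n, (k : ℕ) < n - 1 → k ≠ l := fun k hk =>
      Fin.ne_of_val_ne (by simp [l]; omega)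
    refine by_contra fun hneg => hcross j l hj le_rfl ?_
    rw [← neg_rootNeg]
    exact h.neg_mem ((rootAdd_mem_or h.1 i j).resolve_right hneg) (by rwa [neg_rootAdd])
      (rootAdd_mem_Δroot i j) (hcrossNeg j l hj le_rfl) (rootNeg_mem_Δroot.2 (hl j hj))
      (rootAdd_add_rootNeg i j l ▸ rootSub_mem_Δroot (hl i hi))
  · exact hcrossNeg i j hi hj
  · exact rootNeg_comm j i ▸ hcrossNeg j i hj hi
  · exact absurd (Fin.ext (by omega)) hij

lemma inter_Δroot_eq_Plast (h : IsCominusculeParabolic (Δroot n) Pt) (hn : 3 ≤ n)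
    (hs : IsSplitAt Pt (n - 1))
    (hcross : ∀ i j : Fin n, (i : ℕ) < n - 1 → n - 1 ≤ (j : ℕ) → rootAdd i j ∉ Pt) :
    Pt ∩ Δroot n = Plast n := by
  have hnoAdd : ∀ i j : Fin n, n - 1 ≤ (j : ℕ) → rootAdd i j ∉ Pt := fun i j hj hij =>
    hcross ⟨0, by omega⟩ j (by simp; omega) hj (hs.rootAdd_mem h.1 (Or.inl (by simp; omega)) hij)
  refine inter_Δroot_eq Plast_subset_Δroot (fun i j hij => ?_) (fun i j => ?_) (fun i j hij => ?_)
  · rw [hs i j hij, rootSub_mem_Plast hij]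
    have := Fin.val_ne_of_ne hij
    omega
  · rw [rootAdd_mem_Plast]
    refine ⟨fun hij => by_contra fun hc => ?_,
      fun hij => rootAdd_mem_of_lt_sub_one h hn hs hij.1 hij.2⟩
    rcases lt_or_ge (j : ℕ) (n - 1) with hj | hj
    · exact hnoAdd j i (by omega) (rootAdd_comm i j ▸ hij)
    · exact hnoAdd i j hj hij
  · exact iff_of_true (rootNeg_mem_of_ne h hcross hij) (rootNeg_mem_Plast.2 hij)

end TwoLevels

lemma isStandard_inter_of_isSplitAt (hn : 3 ≤ n) (h : IsCominusculeParabolic (Δroot n) Pt)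
    {p : ℕ} (hp : p ≤ n) (hs : IsSplitAt Pt p) : IsStandard (Pt ∩ Δroot n) := by
  by_cases hext : p = 0 ∨ p = n
  · have hs' : IsSplitAt Pt n := fun i j hij => by
      rw [hs i j hij]
      have := i.isLt
      omega
    rcases inter_Δroot_eq_of_isSplitAt_self h.1 hs' (by omega) with h' | h'
    exacts [Or.inl ⟨n, le_rfl, h'⟩, Or.inl ⟨0, Nat.zero_le n, h'⟩]
  push Not at hext
  by_cases hcross : ∀ i j : Fin n, (i : ℕ) < p → p ≤ (j : ℕ) → rootAdd i j ∈ Pt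
  · exact Or.inl ⟨p, hp, inter_Δroot_eq_Pmid h hs (by omega) (by omega) hcross⟩
  push Not at hcross
  obtain ⟨a, b, ha, hb, hab⟩ := hcross
  have hno : ∀ i j : Fin n, (i : ℕ) < p → p ≤ (j : ℕ) → rootAdd i j ∉ Pt := by
    intro i j hi hj hij
    have haj := hs.rootAdd_mem h.1 (Or.inl ha) hij
    rw [rootAdd_comm] at haj
    have hba := hs.rootAdd_mem h.1 (i := b) (Or.inr hj) haj
    rw [rootAdd_comm] at hba
    exact hab hba
  obtain rfl := eq_sub_one_of_rootAdd_not_mem h hs (by omega) (by omega) hno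
  exact Or.inr (inter_Δroot_eq_Plast h hn hs hno)

theorem exists_perm_isStandard_image (hn : 3 ≤ n) {P : Set (Fin n → ℝ)}
    (hP : IsCominusculeRoots (Δroot n) P) : ∃ σ : Equiv.Perm (Fin n), IsStandard (act σ '' P) := by
  obtain ⟨-, Pt, hPt, rfl⟩ := isCominusculeRoots_iff.1 hP
  obtain ⟨σ, p, hp, hs⟩ := exists_perm_isSplitAt_image hPt
  refine ⟨σ, ?_⟩
  rw [Set.image_inter (act_injective σ), act_image_Δroot]
  exact isStandard_inter_of_isSplitAt hn (hPt.image (e := actEquiv σ) (act_image_Δroot σ)) hp hs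

section LeviUniqueness

variable {M : Set (Fin n → ℝ)} {i : Fin n}

lemma rootAdd_sub_rootAdd_self (j i : Fin n) : rootAdd j i - rootAdd i i = rootSub j i := by
  simp only [rootAdd, rootSub]; abel

lemma rootSub_sub_rootAdd_self (i j : Fin n) : rootSub i j - rootAdd i i = rootNeg i j := by
  simp only [rootAdd, rootSub, rootNeg]; abel

lemma exists_sub_rootAdd_self_mem_Pmid (hn : 2 ≤ n) {q : ℕ} (hq : q ≤ n)
    (hi : rootAdd i i ∈ Pmid n q) :
    ∃ α ∈ Pmid n q, α - rootAdd i i ∈ Δroot n \ Pmid n q := by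
  rw [rootAdd_mem_Pmid, or_self] at hi
  rcases hq.lt_or_eq with hq | rfl
  · set b : Fin n := ⟨q, hq⟩
    have hbi : b ≠ i := Fin.ne_of_val_ne (by simp [b]; omega)
    refine ⟨rootAdd b i, rootAdd_mem_Pmid.2 (Or.inr hi), ?_⟩
    rw [rootAdd_sub_rootAdd_self, Set.mem_sdiff, rootSub_mem_Pmid hbi]
    exact ⟨rootSub_mem_Δroot hbi, by simp [b]; omega⟩
  · obtain ⟨j, -, hji⟩ := Fin.exists_val_lt_ne (by omega) le_rfl i
    refine ⟨rootSub i j, (rootSub_mem_Pmid hji.symm).2 (Or.inl hi), ?_⟩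
    rw [rootSub_sub_rootAdd_self, Set.mem_sdiff, rootNeg_mem_Pmid]
    exact ⟨rootNeg_mem_Δroot.2 hji.symm, by simp [i.isLt, j.isLt]⟩

lemma exists_add_eq_neg_rootAdd_self_Plast (hn : 3 ≤ n) (i : Fin n) :
    ∃ α ∈ Plast n, ∃ β ∈ Plast n, α + β = -rootAdd i i := by
  obtain ⟨k, hk, hki⟩ := Fin.exists_val_lt_ne (by omega : 2 ≤ n - 1) (Nat.sub_le n 1) i
  exact ⟨rootSub k i, (rootSub_mem_Plast hki).2 hk, rootNeg k i, rootNeg_mem_Plast.2 hki,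
    rootSub_add_rootNeg k i i⟩

/-- The only roots `v` with `-v ∉ Δ` are the `2εᵢ`, and `-2εᵢ` is kept out of every parabolic
set inducing `Pmid n q` and forced into every one inducing `Plast n`. -/
lemma IsStandard.isLeviDecomp_unique (hn : 3 ≤ n) (hM : IsStandard M) {L₁ N₁ L₂ N₂}
    (h₁ : IsLeviDecomp (Δroot n) M L₁ N₁) (h₂ : IsLeviDecomp (Δroot n) M L₂ N₂) :
    L₁ = L₂ ∧ N₁ = N₂ := by
  refine IsLeviDecomp.unique (fun v hv => ?_) h₁ h₂
  rcases mem_Δroot.1 (hM.subset_Δroot hv) with ⟨i, j, hij, rfl⟩ | ⟨i, j, rfl⟩ | ⟨i, j, -, rfl⟩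
  · exact Or.inl (neg_rootSub i j ▸ rootSub_mem_Δroot (Ne.symm hij))
  · by_cases hij : i = j
    · subst hij
      rcases hM with ⟨q, hq, rfl⟩ | rfl
      · exact Or.inr (Or.inr (exists_sub_rootAdd_self_mem_Pmid (by omega) hq hv))
      · exact Or.inr (Or.inl (exists_add_eq_neg_rootAdd_self_Plast hn i))
    · exact Or.inl (neg_rootAdd i j ▸ rootNeg_mem_Δroot.2 hij)
  · exact Or.inl (neg_rootNeg i j ▸ rootAdd_mem_Δroot i j)

theorem isLeviDecomp_unique (hn : 3 ≤ n) {Q L₁ N₁ L₂ N₂ : Set (Fin n → ℝ)}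
    (hQ : IsCominusculeRoots (Δroot n) Q) (h₁ : IsLeviDecomp (Δroot n) Q L₁ N₁)
    (h₂ : IsLeviDecomp (Δroot n) Q L₂ N₂) : L₁ = L₂ ∧ N₁ = N₂ := by
  obtain ⟨σ, hσ⟩ := exists_perm_isStandard_image hn hQ
  have hinj := Set.image_injective.2 (act_injective σ)
  obtain ⟨hL, hN⟩ := hσ.isLeviDecomp_unique hn (h₁.image (e := actEquiv σ) (act_image_Δroot σ))
    (h₂.image (e := actEquiv σ) (act_image_Δroot σ))
  exact ⟨hinj hL, hinj hN⟩

end LeviUniqueness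

section Orbits

variable (σ : Equiv.Perm (Fin n)) (S : Set (Fin n → ℝ))

lemma ncard_rootAdd_self_mem_act_image :
    {i | rootAdd i i ∈ act σ '' S}.ncard = {i | rootAdd i i ∈ S}.ncard := by
  have : {i | rootAdd i i ∈ act σ '' S} = σ '' {i | rootAdd i i ∈ S} := by
    ext i
    rw [σ.image_eq_preimage_symm, Set.mem_preimage, Set.mem_ofPred_eq, Set.mem_ofPred_eq,
      mem_act_image, act_rootAdd, Equiv.Perm.inv_def]
  rw [this, Set.ncard_image_of_injective _ σ.injective]

lemma forall_rootNeg_mem_act_image_iff :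
    (∀ i j, i ≠ j → rootNeg i j ∈ act σ '' S) ↔ ∀ i j, i ≠ j → rootNeg i j ∈ S := by
  simp only [mem_act_image, act_rootNeg]
  refine ⟨fun h i j hij => ?_, fun h i j hij => h _ _ (σ⁻¹.injective.ne hij)⟩
  simpa using h (σ i) (σ j) (σ.injective.ne hij)

end Orbits

lemma ncard_setOf_val_lt {q : ℕ} (hq : q ≤ n) : {i : Fin n | (i : ℕ) < q}.ncard = q := by
  rw [Set.ncard_eq_toFinset_card', Set.toFinset_ofPred, Fin.card_filter_val_lt, min_eq_right hq]

lemma ncard_rootAdd_self_mem_P {m : ℕ} (hm : m ≤ n) :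
    {i | rootAdd i i ∈ P n m}.ncard = if m = 0 then n else if m = n then n - 1 else m := by
  unfold P
  split_ifs
  · simp_rw [P0_eq_Pmid, rootAdd_mem_Pmid, or_self]
    exact ncard_setOf_val_lt le_rfl
  · simp_rw [rootAdd_mem_Plast, and_self]
    exact ncard_setOf_val_lt (Nat.sub_le n 1)
  · simp_rw [rootAdd_mem_Pmid, or_self]
    exact ncard_setOf_val_lt hm

lemma forall_rootNeg_mem_Pmid_iff (hn : 2 ≤ n) {q : ℕ} :
    (∀ i j : Fin n, i ≠ j → rootNeg i j ∈ Pmid n q) ↔ q ≤ 1 := by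
  simp_rw [rootNeg_mem_Pmid]
  refine ⟨fun h => ?_, fun hq i j hij => ⟨hij, ?_⟩⟩
  · have := (h ⟨0, by omega⟩ ⟨1, by omega⟩ (by simp)).2
    simp only at this
    omega
  · have := Fin.val_ne_of_ne hij
    omega

lemma forall_rootNeg_mem_P_iff (hn : 2 ≤ n) {m : ℕ} :
    (∀ i j : Fin n, i ≠ j → rootNeg i j ∈ P n m) ↔ m = 1 ∨ m = n := by
  unfold P
  split_ifs with h0 h1
  · rw [P0_eq_Pmid, forall_rootNeg_mem_Pmid_iff hn]
    omega
  · simp [rootNeg_mem_Plast, h1]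
  · rw [forall_rootNeg_mem_Pmid_iff hn]
    omega

/-- The number of `i` with `2εᵢ ∈ P(n₀)`, together with whether `P(n₀)` contains every
`-(εᵢ + εⱼ)`, tells the `P(n₀)` apart and is invariant under `Sₙ`. -/
lemma eq_of_act_image_P_eq (hn : 3 ≤ n) {m m' : ℕ} (hm : m ≤ n) (hm' : m' ≤ n)
    {σ : Equiv.Perm (Fin n)} (h : act σ '' P n m = P n m') : m = m' := by
  have hcard := ncard_rootAdd_self_mem_act_image σ (P n m)
  have hneg := forall_rootNeg_mem_act_image_iff σ (P n m)
  rw [h, ncard_rootAdd_self_mem_P hm, ncard_rootAdd_self_mem_P hm'] at hcard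
  rw [h, forall_rootNeg_mem_P_iff (by omega), forall_rootNeg_mem_P_iff (by omega)] at hneg
  split_ifs at hcard <;> omega

lemma act_image_P_ne_Pminus0 (hn : 3 ≤ n) {m : ℕ} (hm : m ≤ n) (σ : Equiv.Perm (Fin n)) :
    act σ '' P n m ≠ Pminus0 n := fun h => by
  have hcard := ncard_rootAdd_self_mem_act_image σ (P n m)
  rw [h, ncard_rootAdd_self_mem_P hm] at hcard
  simp [rootAdd_not_mem_Pminus0] at hcard
  split_ifs at hcard <;> omega

end Pn

theorem stmt_13_general (n : ℕ) (hn : 3 ≤ n) (P : Set (Fin n → ℝ)) :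
    -- (a)
    ((IsCominusculeRoots (Pn.Δroot n) P ↔
      ∃ σ : Equiv.Perm (Fin n),
        (∃ n₀ ≤ n, Pn.act σ '' P = Pn.P n n₀) ∨ Pn.act σ '' P = Pn.Pminus0 n) ∧
     (∀ n₀ ≤ n, IsCominusculeRoots (Pn.Δroot n) (Pn.P n n₀)) ∧
     IsCominusculeRoots (Pn.Δroot n) (Pn.Pminus0 n) ∧
     (∀ n₀ ≤ n, ∀ n₀' ≤ n,
        (∃ σ : Equiv.Perm (Fin n), Pn.act σ '' (Pn.P n n₀) = Pn.P n n₀') → n₀ = n₀') ∧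
     (∀ n₀ ≤ n, ¬ ∃ σ : Equiv.Perm (Fin n), Pn.act σ '' (Pn.P n n₀) = Pn.Pminus0 n)) ∧
    -- (b)
    (∀ Q : Set (Fin n → ℝ), IsCominusculeRoots (Pn.Δroot n) Q →
      ∀ L₁ N₁ L₂ N₂ : Set (Fin n → ℝ),
        IsLeviDecomp (Pn.Δroot n) Q L₁ N₁ → IsLeviDecomp (Pn.Δroot n) Q L₂ N₂ →
        L₁ = L₂ ∧ N₁ = N₂) := by
  have hstd : ∀ M, Pn.IsStandard M ↔ (∃ n₀ ≤ n, M = Pn.P n n₀) ∨ M = Pn.Pminus0 n :=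
    fun M => Pn.isStandard_iff (by omega)
  have hcom : ∀ M, Pn.IsStandard M → IsCominusculeRoots (Pn.Δroot n) M :=
    fun M hM => hM.isCominusculeRoots (by omega)
  refine ⟨⟨⟨fun h => ?_, fun ⟨σ, hσ⟩ => ?_⟩, fun n₀ h₀ => ?_, ?_, ?_, ?_⟩, ?_⟩
  · obtain ⟨σ, hσ⟩ := Pn.exists_perm_isStandard_image hn h
    exact ⟨σ, (hstd _).1 hσ⟩
  · exact (Pn.isCominusculeRoots_act_image_iff σ).1 (hcom _ ((hstd _).2 hσ))
  · exact hcom _ ((hstd _).2 (.inl ⟨n₀, h₀, rfl⟩))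
  · exact hcom _ ((hstd _).2 (.inr rfl))
  · rintro n₀ h₀ n₀' h₀' ⟨σ, hσ⟩
    exact Pn.eq_of_act_image_P_eq hn h₀ h₀' hσ
  · rintro n₀ h₀ ⟨σ, hσ⟩
    exact Pn.act_image_P_ne_Pminus0 hn h₀ σ hσ
  · intro Q hQ L₁ N₁ L₂ N₂
    exact Pn.isLeviDecomp_unique hn hQ

theorem stmt_13 (n : ℕ) (hn : 3 ≤ n) (P : Set (Fin n → ℝ)) (hP : P ⊆ Pn.Δroot n) :
    -- (a)
    ((IsCominusculeRoots (Pn.Δroot n) P ↔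
      ∃ σ : Equiv.Perm (Fin n),
        (∃ n₀ ≤ n, Pn.act σ '' P = Pn.P n n₀) ∨ Pn.act σ '' P = Pn.Pminus0 n) ∧
     (∀ n₀ ≤ n, IsCominusculeRoots (Pn.Δroot n) (Pn.P n n₀)) ∧
     IsCominusculeRoots (Pn.Δroot n) (Pn.Pminus0 n) ∧
     (∀ n₀ ≤ n, ∀ n₀' ≤ n,
        (∃ σ : Equiv.Perm (Fin n), Pn.act σ '' (Pn.P n n₀) = Pn.P n n₀') → n₀ = n₀') ∧
     (∀ n₀ ≤ n, ¬ ∃ σ : Equiv.Perm (Fin n), Pn.act σ '' (Pn.P n n₀) = Pn.Pminus0 n)) ∧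
    -- (b)
    (∀ Q : Set (Fin n → ℝ), IsCominusculeRoots (Pn.Δroot n) Q →
      ∀ L₁ N₁ L₂ N₂ : Set (Fin n → ℝ),
        IsLeviDecomp (Pn.Δroot n) Q L₁ N₁ → IsLeviDecomp (Pn.Δroot n) Q L₂ N₂ →
        L₁ = L₂ ∧ N₁ = N₂) :=
  stmt_13_general n hn P
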